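/- arXiv:2001.04248 — 5 statements merged into one kernel-verified Lean document; each statement's English description precedes it below -/
import Mathlib

section
/- Let f : ℝ → ℝ → ℝ be continuous and K-Lipschitz in its second argument uniformly in the first. Let a ≤ b, α ≤ β, and let γ : ℝ → ℝ be continuously differentiable on [α,β] with γ(α) = a, γ(β) = b, and γ(x) ∈ [a,b] for all x ∈ [α,β]. Suppose y : ℝ → ℝ satisfies y(a) = t and y'(x) = f(x, y(x)) for every x ∈ [a,b], and suppose v : ℝ → ℝ satisfies v(α) = t and v'(x) = f(γ(x), v(x))·γ'(x) for every x ∈ [α,β]. Then v(x) = y(γ(x)) for all x ∈ [α,β]; in particular v(β) = y(b). (Substitution of variables in the Compositional Integral: ∫_a^b f(s,t) ds • t = ∫_α^β f(γ(s),t) γ'(s) ds • t.) -/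
/-- Substitution of variables in the Compositional Integral:
`∫_a^b f(s,t) ds • t = ∫_α^β f(γ(s),t) γ'(s) ds • t`. -/
theorem compositional_integral_substitution
    (f : ℝ → ℝ → ℝ) (K : NNReal)
    (hf : Continuous (Function.uncurry f))
    (hlip : ∀ x : ℝ, LipschitzWith K (f x))
    (a b α β t : ℝ) (hab : a ≤ b) (hαβ : α ≤ β)
    (γ γ' : ℝ → ℝ)
    (hγ : ∀ x ∈ Set.Icc α β, HasDerivAt γ (γ' x) x)
    (hγ' : ContinuousOn γ' (Set.Icc α β))
    (hγα : γ α = a) (hγβ : γ β = b)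
    (hγmem : ∀ x ∈ Set.Icc α β, γ x ∈ Set.Icc a b)
    (y : ℝ → ℝ) (hya : y a = t)
    (hy : ∀ x ∈ Set.Icc a b, HasDerivAt y (f x (y x)) x)
    (v : ℝ → ℝ) (hvα : v α = t)
    (hv : ∀ x ∈ Set.Icc α β, HasDerivAt v (f (γ x) (v x) * γ' x) x) :
    (∀ x ∈ Set.Icc α β, v x = y (γ x)) ∧ v β = y b := by
  obtain ⟨C, hC⟩ := isCompact_Icc.exists_bound_of_continuousOn hγ' 
  have hC0 : (0:ℝ) ≤ C := le_trans (norm_nonneg _) (hC α ⟨le_rfl, hαβ⟩)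
  set w : ℝ → ℝ → ℝ := fun x z => if x ∈ Set.Icc α β then f (γ x) z * γ' x else 0 with hw
  have hwlip : ∀ x, LipschitzWith (K * C.toNNReal) (w x) := by
    intro x
    by_cases hx : x ∈ Set.Icc α β
    · intro z₁ z₂
      simp only [hw, if_pos hx, edist_dist, Real.dist_eq]
      rw [← ENNReal.ofReal_coe_nnreal, ← ENNReal.ofReal_mul (by positivity)]
      apply ENNReal.ofReal_le_ofReal
      have h1 : |f (γ x) z₁ * γ' x - f (γ x) z₂ * γ' x|
          = |f (γ x) z₁ - f (γ x) z₂| * |γ' x| := by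
        rw [← sub_mul, abs_mul]
      rw [h1]
      have h2 : |f (γ x) z₁ - f (γ x) z₂| ≤ K * |z₁ - z₂| := by
        have := (hlip (γ x)).dist_le_mul z₁ z₂
        simpa [Real.dist_eq] using this
      calc |f (γ x) z₁ - f (γ x) z₂| * |γ' x| ≤ (K * |z₁ - z₂|) * C :=
            mul_le_mul h2 (hC x hx) (abs_nonneg _) (by positivity)
        _ = ↑(K * C.toNNReal) * |z₁ - z₂| := by
            push_cast [Real.coe_toNNReal C hC0]; ring
    · intro z₁ z₂
      have h0 : w x = fun _ => (0:ℝ) := funext fun z => if_neg hx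
      simp [h0]
  have hcv : ContinuousOn v (Set.Icc α β) :=
    fun x hx => ((hv x hx).continuousAt).continuousWithinAt
  have hcy : ContinuousOn (y ∘ γ) (Set.Icc α β) := by
    apply ContinuousOn.comp (t := Set.Icc a b)
    · exact fun x hx => ((hy x hx).continuousAt).continuousWithinAt
    · exact fun x hx => ((hγ x hx).continuousAt).continuousWithinAt
    · exact hγmem
  have key : Set.EqOn v (y ∘ γ) (Set.Icc α β) := by
    apply ODE_solution_unique_of_mem_Icc_right
      (fun x _ => (hwlip x).lipschitzOnWith (s := Set.univ)) hcv
      ?_ (fun _ _ => Set.mem_univ _) hcy ?_ (fun _ _ => Set.mem_univ _)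
      (by simp [hvα, hγα, hya])
    · intro x hx
      have hx' : x ∈ Set.Icc α β := Set.Ico_subset_Icc_self hx
      have he : w x (v x) = f (γ x) (v x) * γ' x := if_pos hx'
      rw [he]
      exact (hv x hx').hasDerivWithinAt
    · intro x hx
      have hx' : x ∈ Set.Icc α β := Set.Ico_subset_Icc_self hx
      have h := (hy (γ x) (hγmem x hx')).comp x (hγ x hx')
      have he : w x ((y ∘ γ) x) = f (γ x) (y (γ x)) * γ' x := if_pos hx'
      rw [he]
      exact h.hasDerivWithinAt
  refine ⟨fun x hx => key hx, ?_⟩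
  have := key ⟨hαβ, le_rfl⟩
  simpa [hγβ] using this
end

section
/- For every t > 0 and every a ∈ [0,1], there exists a function y : ℝ → ℝ such that y(a) = t, y has derivative y'(x) = exp(−x·y(x)) at every x ∈ [a,1], and y(x) > 0 for all x ∈ [a,1]. (Existence part of Theorem 2(1): existence of the Compositional Integral Y_{xa}(t) = ∫_a^x e^{−st} ds • t of e^{−xt}, mapping ℝ⁺ to ℝ⁺.) -/
open Set Metric Real

/-- Clamp to `[t, t+2]`. -/
noncomputable def CIclamp (t s : ℝ) : ℝ := max t (min s (t + 2))

/-- Clamped vector field. -/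
noncomputable def CIv (t x s : ℝ) : ℝ := Real.exp (-(x * CIclamp t s))

lemma CIclamp_mem (t s : ℝ) (ht : 0 < t) : CIclamp t s ∈ Set.Icc t (t + 2) := by
  constructor
  · exact le_max_left _ _
  · exact max_le (by linarith) (le_trans (min_le_right _ _) le_rfl)

lemma CIclamp_lipschitz (t : ℝ) : LipschitzWith 1 (CIclamp t) :=
  (LipschitzWith.id.min_const (t + 2)).const_max t

lemma CIclamp_eq (t s : ℝ) (h1 : t ≤ s) (h2 : s ≤ t + 2) : CIclamp t s = s := by
  unfold CIclamp
  rw [min_eq_left h2, max_eq_right h1]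

/-- Existence of the Compositional Integral of `e^{-xt}`: for every `t > 0` and `a ∈ [0,1]`
there is `y` with `y a = t`, `y' x = exp (-(x * y x))` on `[a,1]`, and `y x > 0` on `[a,1]`. -/
theorem compositional_integral_exp_exists
    (t a : ℝ) (ht : 0 < t) (ha : a ∈ Set.Icc (0:ℝ) 1) :
    ∃ y : ℝ → ℝ, y a = t ∧
      (∀ x ∈ Set.Icc a 1, HasDerivAt y (Real.exp (-(x * y x))) x) ∧
      (∀ x ∈ Set.Icc a 1, 0 < y x) := by
  obtain ⟨ha0, ha1⟩ := ha
  set C : ℝ := Real.exp (2 * (t + 2)) with hCdef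
  have hC : (0:ℝ) < C := Real.exp_pos _
  -- bound on the vector field
  have hxabs : ∀ x ∈ Set.Icc (a - 1) (2:ℝ), |x| ≤ 2 := by
    intro x hx
    rw [abs_le]; exact ⟨by linarith [hx.1], hx.2⟩
  have hvC : ∀ x ∈ Set.Icc (a - 1) (2:ℝ), ∀ u ∈ Set.Icc t (t + 2),
      Real.exp (-(x * u)) ≤ C := by
    intro x hx u hu
    apply Real.exp_le_exp.2
    have h1 : |x * u| ≤ 2 * (t + 2) := by
      rw [abs_mul]
      have hu2 : |u| ≤ t + 2 := by rw [abs_le]; exact ⟨by linarith [hu.1], hu.2⟩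
      exact mul_le_mul (hxabs x hx) hu2 (abs_nonneg _) (by norm_num)
    have := neg_abs_le (x * u)
    linarith
  -- Picard-Lindelöf hypotheses
  set L : NNReal := Real.toNNReal (2 * C) with hLdef
  have hpl : IsPicardLindelof (CIv t) (⟨a, by constructor <;> linarith⟩ : Set.Icc (a - 1) (2:ℝ)) t
      (⟨2 * C, by positivity⟩ : NNReal) 0 (⟨C, hC.le⟩ : NNReal) (L * 1) := by
    constructor
    · -- Lipschitz
      intro x hx
      have hg : LipschitzOnWith L (fun u => Real.exp (-(x * u))) (Set.Icc t (t + 2)) := by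
        apply (convex_Icc t (t + 2)).lipschitzOnWith_of_nnnorm_hasDerivWithin_le
          (f' := fun u => Real.exp (-(x * u)) * (-x))
        · intro u hu
          have hinner : HasDerivAt (fun u : ℝ => -(x * u)) (-x) u := by
            simpa only [Pi.neg_def, id, mul_one] using ((hasDerivAt_id u).const_mul x).neg
          exact hinner.exp.hasDerivWithinAt
        · intro u hu
          rw [← NNReal.coe_le_coe, coe_nnnorm, hLdef,
            Real.coe_toNNReal _ (by positivity)]
          rw [Real.norm_eq_abs, abs_mul, abs_neg]
          calc |Real.exp (-(x * u))| * |x| ≤ C * 2 := by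
                apply mul_le_mul _ (hxabs x hx) (abs_nonneg _) hC.le
                rw [abs_of_pos (Real.exp_pos _)]
                exact hvC x hx u hu
            _ = 2 * C := by ring
      have hcl : LipschitzOnWith 1 (CIclamp t) (closedBall t (2 * C)) :=
        fun p _ q _ => (CIclamp_lipschitz t) p q
      have hmaps : Set.MapsTo (CIclamp t) (closedBall t (2 * C)) (Set.Icc t (t + 2)) :=
        fun s _ => CIclamp_mem t s ht
      exact hg.comp hcl hmaps
    · -- continuity in x
      intro s _
      exact (Real.continuous_exp.comp
        ((continuous_id.mul continuous_const).neg)).continuousOn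
    · -- norm bound
      intro x hx s _
      unfold CIv
      rw [Real.norm_eq_abs, abs_of_pos (Real.exp_pos _)]
      exact hvC x hx _ (CIclamp_mem t s ht)
    · -- C * length ≤ R
      have hmax : max (2 - a) (a - (a - 1)) ≤ 2 := max_le (by linarith) (by linarith)
      simp only [NNReal.coe_zero, sub_zero]
      calc C * max (2 - a) (a - (a - 1)) ≤ C * 2 :=
            mul_le_mul_of_nonneg_left hmax hC.le
        _ = 2 * C := by ring
  obtain ⟨y, hya', hyd⟩ := hpl.exists_eq_forall_mem_Icc_hasDerivWithinAt₀
  have hya : y a = t := hya'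
  -- full derivative at interior points
  have hyd' : ∀ x ∈ Set.Ioo (a - 1) (2:ℝ), HasDerivAt y (CIv t x (y x)) x := fun x hx =>
    (hyd x (Set.Ioo_subset_Icc_self hx)).hasDerivAt (Icc_mem_nhds hx.1 hx.2)
  have hsub : Set.Icc a 1 ⊆ Set.Ioo (a - 1) 2 := fun x hx =>
    ⟨by linarith [hx.1], by linarith [hx.2]⟩
  have hcont : ContinuousOn y (Set.Icc (a - 1) 2) := fun x hx =>
    (hyd x hx).continuousWithinAt
  -- y is strictly monotone on [a-1, 2]
  have hmono : StrictMonoOn y (Set.Icc (a - 1) 2) := by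
    apply strictMonoOn_of_deriv_pos (convex_Icc _ _) hcont
    intro x hx
    rw [interior_Icc] at hx
    rw [(hyd' x hx).deriv]
    exact Real.exp_pos _
  have hlow : ∀ x ∈ Set.Icc a 1, t ≤ y x := by
    intro x hx
    rcases eq_or_lt_of_le hx.1 with h | h
    · rw [← h, hya]
    · have := hmono ⟨by linarith, by linarith⟩ (Set.Ioo_subset_Icc_self (hsub hx)) h
      rw [hya] at this
      exact this.le
  -- upper bound: y x - x is antitone on [a,1]
  have hIccsub : Set.Icc a 1 ⊆ Set.Icc (a - 1) 2 := fun x hx =>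
    Set.Ioo_subset_Icc_self (hsub hx)
  have hanti : AntitoneOn (fun x => y x - x) (Set.Icc a 1) := by
    apply antitoneOn_of_deriv_nonpos (convex_Icc _ _)
    · exact (hcont.mono hIccsub).sub continuousOn_id
    · intro x hx
      rw [interior_Icc] at hx
      have hx' : x ∈ Set.Ioo (a - 1) (2:ℝ) := ⟨by linarith [hx.1], by linarith [hx.2]⟩
      exact ((hyd' x hx').sub (hasDerivAt_id x)).differentiableAt.differentiableWithinAt
    · intro x hx
      rw [interior_Icc] at hx
      have hx' : x ∈ Set.Ioo (a - 1) (2:ℝ) := ⟨by linarith [hx.1], by linarith [hx.2]⟩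
      have hd : HasDerivAt (fun x => y x - x) (CIv t x (y x) - 1) x :=
        (hyd' x hx').sub (hasDerivAt_id x)
      rw [hd.deriv]
      have hxpos : 0 < x := lt_of_le_of_lt ha0 hx.1
      have hcpos : 0 < CIclamp t (y x) := lt_of_lt_of_le ht (CIclamp_mem t (y x) ht).1
      have : CIv t x (y x) ≤ 1 := by
        unfold CIv
        rw [show (1:ℝ) = Real.exp 0 from (Real.exp_zero).symm]
        apply Real.exp_le_exp.2
        nlinarith
      linarith
  have hup : ∀ x ∈ Set.Icc a 1, y x ≤ t + 2 := by
    intro x hx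
    have := hanti (Set.left_mem_Icc.2 (by linarith)) hx hx.1
    simp only [hya] at this
    have hx1 : x ≤ 1 := hx.2
    linarith
  refine ⟨y, hya, fun x hx => ?_, fun x hx => lt_of_lt_of_le ht (hlow x hx)⟩
  have h := hyd' x (hsub hx)
  have hc : CIclamp t (y x) = y x := CIclamp_eq t (y x) (hlow x hx) (hup x hx)
  unfold CIv at h
  rwa [hc] at h
end

section
/- Let 0 ≤ a ≤ b ≤ 1 and t > 0, and let y : ℝ → ℝ satisfy y(a) = t, have derivative y'(x) = exp(−x·y(x)) at every x ∈ [a,b], with y(x) > 0 on [a,b]. Then for every ε > 0 there exists δ > 0 such that: for every n ≥ 1, every partition a = x_0 ≤ x_1 ≤ ⋯ ≤ x_n = b with mesh max_i (x_{i+1} − x_i) < δ, and every choice of tags σ_i ∈ [x_i, x_{i+1}], the Euler iterates defined by t_0 = t and t_{i+1} = t_i + exp(−σ_i · t_i)·(x_{i+1} − x_i) satisfy |t_n − y(b)| < ε. (Theorem 2(2): the Riemann Composition ⨀_{i} (t + e^{−s_i* t} Δs_i) • t converges to the Compositional Integral Y_{ba}(t) of e^{−xt} as the mesh tends to 0.)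 -/
/-- The Euler iterates `t_0 = t`, `t_{i+1} = t_i + exp (-(σ i * t_i)) * (x (i+1) - x i)`. -/
noncomputable def eulerIter (σ x : ℕ → ℝ) (t : ℝ) : ℕ → ℝ
  | 0 => t
  | i + 1 => eulerIter σ x t i + Real.exp (-(σ i * eulerIter σ x t i)) * (x (i + 1) - x i)

/-- `u ↦ exp (-u)` is 1-Lipschitz on nonnegative reals. -/
lemma exp_neg_lip {u v : ℝ} (hu : 0 ≤ u) (hv : 0 ≤ v) :
    |Real.exp (-u) - Real.exp (-v)| ≤ |u - v| := by
  wlog h : v ≤ u generalizing u v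
  · rw [abs_sub_comm, abs_sub_comm u v]
    exact this hv hu (le_of_not_ge h)
  · have h1 : Real.exp (-u) ≤ Real.exp (-v) := Real.exp_le_exp.mpr (by linarith)
    rw [abs_of_nonpos (by linarith), abs_of_nonneg (by linarith)]
    have h2 : Real.exp (-v) ≤ 1 := Real.exp_le_one_iff.mpr (by linarith)
    have h3 : (v - u) + 1 ≤ Real.exp (v - u) := Real.add_one_le_exp _
    have h5 : Real.exp (v - u) ≤ 1 := Real.exp_le_one_iff.mpr (by linarith)
    have h4 : Real.exp (-v) * Real.exp (v - u) = Real.exp (-u) := by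
      rw [← Real.exp_add]; ring_nf
    nlinarith [Real.exp_pos (-v), Real.exp_pos (v - u),
      mul_nonneg (by linarith : (0:ℝ) ≤ 1 - Real.exp (-v))
        (by linarith : (0:ℝ) ≤ 1 - Real.exp (v - u))]

lemma eulerIter_succ (σ x : ℕ → ℝ) (t : ℝ) (i : ℕ) :
    eulerIter σ x t (i + 1)
      = eulerIter σ x t i + Real.exp (-(σ i * eulerIter σ x t i)) * (x (i + 1) - x i) := rfl

set_option maxHeartbeats 1000000 in
/-- Theorem 2(2): the Riemann Composition (the nested Euler steps over a tagged partition of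
`[a,b]`) converges to the Compositional Integral `Y_{ba}(t)` of `e^{-xt}` as the mesh tends
to zero. -/
theorem riemann_composition_converges
    (a b t : ℝ) (ha : 0 ≤ a) (hab : a ≤ b) (hb : b ≤ 1) (ht : 0 < t)
    (y : ℝ → ℝ) (hya : y a = t)
    (hy : ∀ x ∈ Set.Icc a b, HasDerivAt y (Real.exp (-(x * y x))) x)
    (hpos : ∀ x ∈ Set.Icc a b, 0 < y x) :
    ∀ ε > 0, ∃ δ > 0, ∀ n : ℕ, 1 ≤ n → ∀ x σ : ℕ → ℝ,
      x 0 = a → x n = b →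
      (∀ i < n, x i ≤ x (i + 1)) →
      (∀ i < n, x (i + 1) - x i < δ) →
      (∀ i < n, σ i ∈ Set.Icc (x i) (x (i + 1))) →
      |eulerIter σ x t n - y b| < ε := by
  intro ε hε
  set K : ℝ := t + 2 with hK
  have hKpos : 0 < K := by positivity
  have hE1 : (0:ℝ) < Real.exp 1 := Real.exp_pos 1
  refine ⟨ε / (K * Real.exp 1), by positivity, ?_⟩
  set δ : ℝ := ε / (K * Real.exp 1) with hδdef
  have hδpos : 0 < δ := by positivity
  intro n hn x σ hx0 hxn hmonoP hmesh hσ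
  -- basic facts about the partition
  have hxm : ∀ j, j ≤ n → ∀ i, i ≤ j → x i ≤ x j := by
    intro j
    induction j with
    | zero => intro _ i hi; interval_cases i; exact le_rfl
    | succ j ih =>
      intro hj i hi
      rcases Nat.eq_or_lt_of_le hi with h | h
      · subst h; exact le_rfl
      · exact le_trans (ih (by omega) i (by omega)) (hmonoP j (by omega))
  have hxab : ∀ i, i ≤ n → x i ∈ Set.Icc a b := by
    intro i hi
    exact ⟨hx0 ▸ hxm i hi 0 (Nat.zero_le _), hxn ▸ hxm n le_rfl i hi⟩
  -- properties of y
  have hconty : ContinuousOn y (Set.Icc a b) := fun u hu =>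
    ((hy u hu).continuousAt).continuousWithinAt
  have hymono : MonotoneOn y (Set.Icc a b) := by
    refine StrictMonoOn.monotoneOn (strictMonoOn_of_deriv_pos (convex_Icc a b) hconty ?_)
    intro u hu
    rw [interior_Icc] at hu
    rw [(hy u (Set.Ioo_subset_Icc_self hu)).deriv]
    exact Real.exp_pos _
  have hyt : ∀ u ∈ Set.Icc a b, t ≤ y u := by
    intro u hu
    have := hymono ⟨le_rfl, hab⟩ hu hu.1
    linarith [hya ▸ this]
  have hylip : ∀ u ∈ Set.Icc a b, ∀ v ∈ Set.Icc a b, |y v - y u| ≤ |v - u| := by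
    intro u hu v hv
    have := Convex.norm_image_sub_le_of_norm_hasDerivWithin_le
      (f := y) (f' := fun z => Real.exp (-(z * y z))) (s := Set.Icc a b) (C := 1)
      (fun z hz => (hy z hz).hasDerivWithinAt) ?_ (convex_Icc a b) hu hv
    · simpa using this
    · intro z hz
      rw [Real.norm_eq_abs, abs_of_pos (Real.exp_pos _)]
      refine Real.exp_le_one_iff.mpr ?_
      have h0z : 0 ≤ z := le_trans ha hz.1
      nlinarith [hpos z hz]
  have hyub : ∀ u ∈ Set.Icc a b, y u ≤ t + 1 := by
    intro u hu
    have h1 := hylip a ⟨le_rfl, hab⟩ u hu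
    have h2 : |u - a| ≤ 1 := by
      rw [abs_of_nonneg (by linarith [hu.1])]; linarith [hu.2]
    have := abs_le.mp (le_trans h1 h2)
    linarith [this.2, hya ▸ (le_refl (y a))]
  -- bounds on the Euler iterates
  have htlb : ∀ i, i ≤ n → t ≤ eulerIter σ x t i := by
    intro i
    induction i with
    | zero => intro _; exact le_rfl
    | succ i ih =>
      intro hi
      have hΔ : 0 ≤ x (i + 1) - x i := by linarith [hmonoP i (by omega)]
      have := ih (by omega)
      have hexp : 0 < Real.exp (-(σ i * eulerIter σ x t i)) := Real.exp_pos _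
      rw [eulerIter_succ]
      nlinarith
  have htub : ∀ i, i ≤ n → eulerIter σ x t i ≤ t + (x i - a) := by
    intro i
    induction i with
    | zero => intro _; simp [eulerIter, hx0]
    | succ i ih =>
      intro hi
      have hΔ : 0 ≤ x (i + 1) - x i := by linarith [hmonoP i (by omega)]
      have hti := htlb i (by omega)
      have hσi := hσ i (by omega)
      have hσ0 : 0 ≤ σ i := le_trans (le_trans ha (hxab i (by omega)).1) hσi.1
      have hexp : Real.exp (-(σ i * eulerIter σ x t i)) ≤ 1 := by
        refine Real.exp_le_one_iff.mpr ?_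
        nlinarith
      have := ih (by omega)
      rw [eulerIter_succ]
      nlinarith [Real.exp_pos (-(σ i * eulerIter σ x t i))]
  -- the main error estimate by induction
  have hE : ∀ i, i ≤ n → |eulerIter σ x t i - y (x i)| ≤ K * δ * (Real.exp (x i - a) - 1) := by
    intro i
    induction i with
    | zero => simp [eulerIter, hx0, hya]
    | succ i ih =>
      intro hi
      have hiln : i < n := by omega
      have IH := ih (by omega)
      have hΔ : 0 ≤ x (i + 1) - x i := by linarith [hmonoP i hiln]
      rcases eq_or_lt_of_le hΔ with hΔ0 | hΔpos
      · -- degenerate cell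
        have hx1 : x (i + 1) = x i := by linarith
        rw [eulerIter_succ, hx1]
        simpa using IH
      · -- nondegenerate cell : mean value theorem
        have hxi := hxab i (by omega)
        have hxi1 := hxab (i + 1) hi
        have hsub : Set.Icc (x i) (x (i + 1)) ⊆ Set.Icc a b :=
          Set.Icc_subset_Icc hxi.1 hxi1.2
        have hlt : x i < x (i + 1) := by linarith
        obtain ⟨ξ, hξmem, hξ⟩ := exists_hasDerivAt_eq_slope y
          (fun u => Real.exp (-(u * y u))) hlt
          (fun u hu => ((hy u (hsub hu)).continuousAt).continuousWithinAt)
          (fun u hu => hy u (hsub (Set.Ioo_subset_Icc_self hu)))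
        have hξab : ξ ∈ Set.Icc a b := hsub (Set.Ioo_subset_Icc_self hξmem)
        have hyd : y (x (i + 1)) - y (x i) = Real.exp (-(ξ * y ξ)) * (x (i + 1) - x i) := by
          rw [hξ]; field_simp
        -- bounds on the various quantities
        have hσi := hσ i hiln
        have hσ0 : 0 ≤ σ i := le_trans (le_trans ha hxi.1) hσi.1
        have hσ1 : σ i ≤ 1 := le_trans hσi.2 (le_trans hxi1.2 hb)
        have hξ0 : 0 ≤ ξ := le_trans ha hξab.1
        have hξ1 : ξ ≤ 1 := le_trans hξab.2 hb
        have hti := htlb i (by omega)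
        have hyxi := hyt (x i) hxi
        have hyxiub := hyub (x i) hxi
        have hyξ := hyt ξ hξab
        have hmeshi := hmesh i hiln
        have hσξ : |σ i - ξ| ≤ x (i + 1) - x i := by
          rw [abs_le]
          constructor <;> [linarith [hσi.1, hξmem.2]; linarith [hσi.2, hξmem.1]]
        have hyLip : |y ξ - y (x i)| ≤ x (i + 1) - x i := by
          refine le_trans (hylip (x i) hxi ξ hξab) ?_
          rw [abs_of_nonneg (by linarith [hξmem.1])]
          linarith [hξmem.2]
        -- the one-step estimate
        have hargA : (0:ℝ) ≤ σ i * eulerIter σ x t i := by nlinarith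
        have hargB : (0:ℝ) ≤ ξ * y ξ := by nlinarith
        have hexpLip := exp_neg_lip hargA hargB
        have harg : |σ i * eulerIter σ x t i - ξ * y ξ|
            ≤ |eulerIter σ x t i - y (x i)| + K * δ := by
          have hsplit : σ i * eulerIter σ x t i - ξ * y ξ
              = σ i * (eulerIter σ x t i - y (x i)) + (σ i - ξ) * y (x i)
                + ξ * (y (x i) - y ξ) := by ring
          calc |σ i * eulerIter σ x t i - ξ * y ξ|
              ≤ |σ i * (eulerIter σ x t i - y (x i))| + |(σ i - ξ) * y (x i)|
                + |ξ * (y (x i) - y ξ)| := by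
                rw [hsplit]; exact le_trans (abs_add_le _ _) (by gcongr <;> exact abs_add_le _ _)
            _ = σ i * |eulerIter σ x t i - y (x i)| + |σ i - ξ| * y (x i)
                + ξ * |y (x i) - y ξ| := by
                rw [abs_mul, abs_mul, abs_mul, abs_of_nonneg hσ0, abs_of_nonneg hξ0,
                  abs_of_nonneg (by linarith : (0:ℝ) ≤ y (x i))]
            _ ≤ |eulerIter σ x t i - y (x i)| + K * δ := by
                have e1 : σ i * |eulerIter σ x t i - y (x i)|
                    ≤ |eulerIter σ x t i - y (x i)| := by
                  nlinarith [abs_nonneg (eulerIter σ x t i - y (x i))]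
                have e2 : |σ i - ξ| * y (x i) ≤ δ * (t + 1) := by
                  nlinarith [abs_nonneg (σ i - ξ)]
                have e3 : ξ * |y (x i) - y ξ| ≤ δ := by
                  rw [abs_sub_comm] at hyLip
                  nlinarith [abs_nonneg (y (x i) - y ξ)]
                rw [hK]; nlinarith
        have hstep : |eulerIter σ x t (i + 1) - y (x (i + 1))|
            ≤ |eulerIter σ x t i - y (x i)| * (1 + (x (i + 1) - x i))
              + K * δ * (x (i + 1) - x i) := by
          have hrw : eulerIter σ x t (i + 1) - y (x (i + 1))
              = (eulerIter σ x t i - y (x i))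
                + (Real.exp (-(σ i * eulerIter σ x t i)) - Real.exp (-(ξ * y ξ)))
                  * (x (i + 1) - x i) := by
            rw [eulerIter_succ]
            linarith [hyd]
          rw [hrw]
          calc |(eulerIter σ x t i - y (x i))
                + (Real.exp (-(σ i * eulerIter σ x t i)) - Real.exp (-(ξ * y ξ)))
                  * (x (i + 1) - x i)|
              ≤ |eulerIter σ x t i - y (x i)|
                + |Real.exp (-(σ i * eulerIter σ x t i)) - Real.exp (-(ξ * y ξ))|
                  * (x (i + 1) - x i) := by
                refine le_trans (abs_add_le _ _) ?_
                rw [abs_mul, abs_of_nonneg hΔ]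
            _ ≤ _ := by
                have h5 := le_trans hexpLip harg
                nlinarith [abs_nonneg (eulerIter σ x t i - y (x i))]
        -- discrete Grönwall step
        have hexpΔ : 1 + (x (i + 1) - x i) ≤ Real.exp (x (i + 1) - x i) := by
          linarith [Real.add_one_le_exp (x (i + 1) - x i)]
        have hsum : Real.exp (x (i + 1) - a)
            = Real.exp (x i - a) * Real.exp (x (i + 1) - x i) := by
          rw [← Real.exp_add]; ring_nf
        have hKδ : 0 < K * δ := by positivity
        have h6 : |eulerIter σ x t i - y (x i)| * (1 + (x (i + 1) - x i))
            ≤ K * δ * (Real.exp (x i - a) - 1) * (1 + (x (i + 1) - x i)) := by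
          nlinarith
        have h7 : Real.exp (x i - a) * (1 + (x (i + 1) - x i))
            ≤ Real.exp (x i - a) * Real.exp (x (i + 1) - x i) := by
          nlinarith [Real.exp_pos (x i - a)]
        calc |eulerIter σ x t (i + 1) - y (x (i + 1))|
            ≤ |eulerIter σ x t i - y (x i)| * (1 + (x (i + 1) - x i))
              + K * δ * (x (i + 1) - x i) := hstep
          _ ≤ K * δ * (Real.exp (x i - a) - 1) * (1 + (x (i + 1) - x i))
              + K * δ * (x (i + 1) - x i) := by linarith
          _ = K * δ * (Real.exp (x i - a) * (1 + (x (i + 1) - x i)) - 1) := by ring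
          _ ≤ K * δ * (Real.exp (x (i + 1) - a) - 1) := by
              have h10 : Real.exp (x i - a) * (1 + (x (i + 1) - x i))
                  ≤ Real.exp (x (i + 1) - a) := by rw [hsum]; exact h7
              have h11 := mul_le_mul_of_nonneg_left
                (by linarith : Real.exp (x i - a) * (1 + (x (i + 1) - x i)) - 1
                  ≤ Real.exp (x (i + 1) - a) - 1) hKδ.le
              linarith
  -- conclude
  have hfin := hE n le_rfl
  rw [hxn] at hfin
  have h8 : Real.exp (b - a) ≤ Real.exp 1 := Real.exp_le_exp.mpr (by linarith)
  have hKδ : 0 < K * δ := by positivity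
  have h9 : K * δ * Real.exp 1 = ε := by
    rw [hδdef]; field_simp
  nlinarith [hfin, h8]
end

section
/- Let p : ℝ → ℝ be continuous on [a,b] with a ≤ b. Then for every ε > 0 there exists δ > 0 such that for every n ≥ 1, every partition a = x_0 ≤ x_1 ≤ ⋯ ≤ x_n = b with mesh max_i (x_{i+1} − x_i) < δ, and every choice of tags σ_i ∈ [x_i, x_{i+1}], one has | ∏_{i=0}^{n−1} (1 + p(σ_i)·(x_{i+1} − x_i)) − exp(∫_a^b p(s) ds) | < ε. (The Compositional Integral of f(s,t) = p(s)·t reduces to the Volterra product integral: ∫_a^b p(s)·t ds • t = t·exp(∫_a^b p(s) ds) realized as a limit of Riemann products.) -/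
set_option maxHeartbeats 1600000

/-- Key log estimate: `|log (1+u) - u| ≤ 2 u²` for `|u| ≤ 1/2`. -/
lemma log_one_add_sub_self_le {u : ℝ} (hu : |u| ≤ 1/2) :
    |Real.log (1 + u) - u| ≤ 2 * u ^ 2 := by
  have h1 : |(-u)| < 1 := by rw [abs_neg]; linarith
  have h := Real.abs_log_sub_add_sum_range_le h1 1
  simp only [Finset.sum_range_one, pow_one, Nat.cast_zero, zero_add, div_one] at h
  have heq : (1 : ℝ) - -u = 1 + u := by ring
  rw [heq, abs_neg] at h
  have h2 : -u + Real.log (1 + u) = Real.log (1 + u) - u := by ring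
  rw [h2] at h
  have h3 : |u| ^ (1 + 1) / (1 - |u|) ≤ 2 * u ^ 2 := by
    rw [div_le_iff₀ (by linarith [abs_nonneg u] : (0:ℝ) < 1 - |u|)]
    have h4 : |u| ^ (1 + 1) = u ^ 2 := by
      norm_num [sq_abs]
    rw [h4]
    nlinarith [mul_nonneg (sq_nonneg u) (by linarith : (0:ℝ) ≤ 1 - 2 * |u|)]
  exact h.trans h3

/-- The Compositional Integral of `f(s,t) = p(s)·t` reduces to the Volterra product
integral: the Riemann products `∏ (1 + p(σ i) Δx_i)` converge to `exp (∫_a^b p)` as the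
mesh tends to zero. -/
theorem riemann_product_tendsto_exp_integral
    (p : ℝ → ℝ) (a b : ℝ) (hab : a ≤ b)
    (hp : ContinuousOn p (Set.Icc a b)) :
    ∀ ε > 0, ∃ δ > 0, ∀ n : ℕ, 1 ≤ n → ∀ x σ : ℕ → ℝ,
      x 0 = a → x n = b →
      (∀ i < n, x i ≤ x (i + 1)) →
      (∀ i < n, x (i + 1) - x i < δ) →
      (∀ i < n, σ i ∈ Set.Icc (x i) (x (i + 1))) →
      |(∏ i ∈ Finset.range n, (1 + p (σ i) * (x (i + 1) - x i))) -
        Real.exp (∫ s in a..b, p s)| < ε := by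
  intro ε hε
  obtain ⟨M, hM⟩ := (isCompact_Icc (a := a) (b := b)).exists_bound_of_continuousOn hp
  set C : ℝ := max M 1 with hCdef
  have hC1 : (1:ℝ) ≤ C := le_max_right _ _
  have hC0 : (0:ℝ) < C := lt_of_lt_of_le one_pos hC1
  have hpC : ∀ s ∈ Set.Icc a b, |p s| ≤ C := fun s hs =>
    le_trans (by simpa using hM s hs) (le_max_left _ _)
  set I : ℝ := ∫ s in a..b, p s with hIdef
  set D : ℝ := b - a with hDdef
  have hD : 0 ≤ D := sub_nonneg.mpr hab
  have hexp : 0 < Real.exp I := Real.exp_pos I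
  set η : ℝ := min 1 (ε / (4 * Real.exp I)) with hηdef
  have hη0 : 0 < η := lt_min one_pos (div_pos hε (by positivity))
  have hη1 : η ≤ 1 := min_le_left _ _
  have hηε : 2 * Real.exp I * η ≤ ε / 2 := by
    have h := min_le_right 1 (ε / (4 * Real.exp I))
    have h2 : 2 * Real.exp I * η ≤ 2 * Real.exp I * (ε / (4 * Real.exp I)) :=
      mul_le_mul_of_nonneg_left h (by positivity)
    have heq : 2 * Real.exp I * (ε / (4 * Real.exp I)) = ε / 2 := by
      field_simp; ring
    linarith [heq ▸ h2]
  set ε' : ℝ := η / (2 * D + 2) with hε'def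
  have hε'0 : 0 < ε' := div_pos hη0 (by linarith)
  have hup := Metric.uniformContinuousOn_iff.mp
    ((isCompact_Icc (a := a) (b := b)).uniformContinuousOn_of_continuous hp) ε' hε'0
  obtain ⟨δ₁, hδ₁0, hδ₁⟩ := hup
  set δ'' : ℝ := η / (4 * C ^ 2 * D + 2) with hδ''def
  have hδ''0 : 0 < δ'' := div_pos hη0 (by positivity)
  clear_value C I D η ε' δ''
  refine ⟨min δ₁ (min (1 / (2 * C)) δ''), lt_min hδ₁0 (lt_min (by positivity) hδ''0), ?_⟩
  intro n hn x σ hx0 hxn hmono hmesh hσ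
  -- monotonicity of the partition
  have hkey : ∀ j, j ≤ n → ∀ i, i ≤ j → x i ≤ x j := by
    intro j
    induction j with
    | zero => intro _ i hi; simp [Nat.le_zero.mp hi]
    | succ k ih =>
      intro hj i hi
      rcases Nat.eq_or_lt_of_le hi with h | h
      · simp [h]
      · exact le_trans (ih (Nat.le_of_succ_le hj) i (Nat.lt_succ_iff.mp h)) (hmono k hj)
  have hmem : ∀ i, i ≤ n → x i ∈ Set.Icc a b := fun i hi =>
    ⟨hx0 ▸ hkey i hi 0 (Nat.zero_le i), hxn ▸ hkey n le_rfl i hi⟩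
  have hΔ0 : ∀ i < n, 0 ≤ x (i + 1) - x i := fun i hi => sub_nonneg.mpr (hmono i hi)
  have hσmem : ∀ i < n, σ i ∈ Set.Icc a b := fun i hi =>
    ⟨le_trans (hmem i hi.le).1 (hσ i hi).1, le_trans (hσ i hi).2 (hmem (i + 1) hi).2⟩
  have hsum : ∑ i ∈ Finset.range n, (x (i + 1) - x i) = D := by
    rw [Finset.sum_range_sub, hxn, hx0, hDdef]
  have hmeshδ₁ : ∀ i < n, x (i + 1) - x i < δ₁ := fun i hi =>
    lt_of_lt_of_le (hmesh i hi) (min_le_left _ _)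
  have hmeshC : ∀ i < n, x (i + 1) - x i ≤ 1 / (2 * C) := fun i hi =>
    le_of_lt (lt_of_lt_of_le (hmesh i hi) ((min_le_right _ _).trans (min_le_left _ _)))
  have hmeshδ'' : ∀ i < n, x (i + 1) - x i ≤ δ'' := fun i hi =>
    le_of_lt (lt_of_lt_of_le (hmesh i hi) ((min_le_right _ _).trans (min_le_right _ _)))
  -- integrability
  have hint : ∀ i < n, IntervalIntegrable p MeasureTheory.volume (x i) (x (i + 1)) := by
    intro i hi
    apply ContinuousOn.intervalIntegrable
    rw [Set.uIcc_of_le (hmono i hi)]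
    exact hp.mono (Set.Icc_subset_Icc (hmem i hi.le).1 (hmem (i + 1) hi).2)
  have hIeq : ∑ i ∈ Finset.range n, (∫ s in x i..x (i + 1), p s) = I := by
    rw [hIdef, ← hx0, ← hxn]
    exact intervalIntegral.sum_integral_adjacent_intervals fun k hk => hint k hk
  -- per-interval estimate
  have hterm : ∀ i < n,
      |(∫ s in x i..x (i + 1), p s) - p (σ i) * (x (i + 1) - x i)| ≤
        ε' * (x (i + 1) - x i) := by
    intro i hi
    have hconst : (∫ _ in x i..x (i + 1), p (σ i)) = p (σ i) * (x (i + 1) - x i) := by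
      simp [mul_comm]
    rw [← hconst, ← intervalIntegral.integral_sub (hint i hi) intervalIntegrable_const]
    have hb : ∀ s ∈ Set.uIoc (x i) (x (i + 1)), ‖p s - p (σ i)‖ ≤ ε' := by
      intro s hs
      rw [Set.uIoc_of_le (hmono i hi)] at hs
      have hs1 : x i ≤ s := hs.1.le
      have hs2 : s ≤ x (i + 1) := hs.2
      have hsab : s ∈ Set.Icc a b :=
        ⟨le_trans (hmem i hi.le).1 hs1, le_trans hs2 (hmem (i + 1) hi).2⟩
      have h1 := (hσ i hi).1
      have h2 := (hσ i hi).2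
      have hdist : dist s (σ i) < δ₁ := by
        rw [Real.dist_eq]
        have habs : |s - σ i| ≤ x (i + 1) - x i :=
          abs_sub_le_iff.mpr ⟨by linarith, by linarith⟩
        exact lt_of_le_of_lt habs (hmeshδ₁ i hi)
      have := hδ₁ s hsab (σ i) (hσmem i hi) hdist
      rw [Real.dist_eq] at this
      exact le_of_lt this
    have hnorm := intervalIntegral.norm_integral_le_of_norm_le_const hb
    rwa [Real.norm_eq_abs, abs_of_nonneg (hΔ0 i hi)] at hnorm
  -- Riemann sum close to integral
  set S : ℝ := ∑ i ∈ Finset.range n, p (σ i) * (x (i + 1) - x i) with hSdef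
  clear_value S
  have hSI : |S - I| ≤ η / 2 := by
    have heq : S - I = -(∑ i ∈ Finset.range n,
        ((∫ s in x i..x (i + 1), p s) - p (σ i) * (x (i + 1) - x i))) := by
      rw [Finset.sum_sub_distrib, hIeq, hSdef]; ring
    rw [heq, abs_neg]
    calc |∑ i ∈ Finset.range n,
          ((∫ s in x i..x (i + 1), p s) - p (σ i) * (x (i + 1) - x i))|
        ≤ ∑ i ∈ Finset.range n,
          |(∫ s in x i..x (i + 1), p s) - p (σ i) * (x (i + 1) - x i)| :=
          Finset.abs_sum_le_sum_abs _ _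
      _ ≤ ∑ i ∈ Finset.range n, ε' * (x (i + 1) - x i) :=
          Finset.sum_le_sum fun i hi => hterm i (Finset.mem_range.mp hi)
      _ = ε' * D := by rw [← Finset.mul_sum, hsum]
      _ ≤ η / 2 := by
          rw [hε'def, div_mul_eq_mul_div, div_le_div_iff₀ (by linarith) two_pos]
          nlinarith [hη0.le, hD]
  -- factor estimates
  have hu : ∀ i < n, |p (σ i) * (x (i + 1) - x i)| ≤ 1 / 2 := by
    intro i hi
    rw [abs_mul, abs_of_nonneg (hΔ0 i hi)]
    calc |p (σ i)| * (x (i + 1) - x i) ≤ C * (1 / (2 * C)) :=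
          mul_le_mul (hpC _ (hσmem i hi)) (hmeshC i hi) (hΔ0 i hi) hC0.le
      _ = 1 / 2 := by field_simp
  have hypos : ∀ i < n, 0 < 1 + p (σ i) * (x (i + 1) - x i) := by
    intro i hi
    have := (abs_le.mp (hu i hi)).1
    linarith
  set P : ℝ := ∏ i ∈ Finset.range n, (1 + p (σ i) * (x (i + 1) - x i)) with hPdef
  clear_value P
  have hP0 : 0 < P := by
    rw [hPdef]
    exact Finset.prod_pos fun i hi => hypos i (Finset.mem_range.mp hi)
  have hlogP : Real.log P = ∑ i ∈ Finset.range n,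
      Real.log (1 + p (σ i) * (x (i + 1) - x i)) := by
    rw [hPdef]
    exact Real.log_prod fun i hi => (hypos i (Finset.mem_range.mp hi)).ne'
  -- log of product close to Riemann sum
  have hlogS : |Real.log P - S| ≤ η / 2 := by
    rw [hlogP, hSdef, ← Finset.sum_sub_distrib]
    calc |∑ i ∈ Finset.range n,
          (Real.log (1 + p (σ i) * (x (i + 1) - x i)) - p (σ i) * (x (i + 1) - x i))|
        ≤ ∑ i ∈ Finset.range n,
          |Real.log (1 + p (σ i) * (x (i + 1) - x i)) - p (σ i) * (x (i + 1) - x i)| :=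
          Finset.abs_sum_le_sum_abs _ _
      _ ≤ ∑ i ∈ Finset.range n, 2 * C ^ 2 * δ'' * (x (i + 1) - x i) := by
          apply Finset.sum_le_sum
          intro i hi
          have hi' := Finset.mem_range.mp hi
          refine le_trans (log_one_add_sub_self_le (hu i hi')) ?_
          have habs : |p (σ i) * (x (i + 1) - x i)| ≤ C * (x (i + 1) - x i) := by
            rw [abs_mul, abs_of_nonneg (hΔ0 i hi')]
            exact mul_le_mul_of_nonneg_right (hpC _ (hσmem i hi')) (hΔ0 i hi')
          have hsq : (p (σ i) * (x (i + 1) - x i)) ^ 2 ≤ (C * (x (i + 1) - x i)) ^ 2 := by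
            rw [← sq_abs]
            exact pow_le_pow_left₀ (abs_nonneg _) habs 2
          have h4 : (C * (x (i + 1) - x i)) ^ 2 ≤ C ^ 2 * δ'' * (x (i + 1) - x i) := by
            have h5 := mul_le_mul_of_nonneg_left (hmeshδ'' i hi')
              (mul_nonneg (mul_nonneg hC0.le hC0.le) (hΔ0 i hi'))
            nlinarith
          linarith [hsq, h4]
      _ = 2 * C ^ 2 * δ'' * D := by rw [← Finset.mul_sum, hsum]
      _ ≤ η / 2 := by
          have hden : (0:ℝ) < 4 * C ^ 2 * D + 2 := by positivity
          have heq2 : 2 * C ^ 2 * δ'' * D = (2 * C ^ 2 * η * D) / (4 * C ^ 2 * D + 2) := by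
            rw [hδ''def]; ring
          rw [heq2, div_le_div_iff₀ hden (by norm_num : (0:ℝ) < 2)]
          ring_nf
          nlinarith [hη0.le, hD, mul_nonneg (mul_nonneg (sq_nonneg C) hD) hη0.le]
  have hlogI : |Real.log P - I| ≤ η := by
    calc |Real.log P - I| ≤ |Real.log P - S| + |S - I| := abs_sub_le _ _ _
      _ ≤ η / 2 + η / 2 := add_le_add hlogS hSI
      _ = η := by ring
  -- conclude
  have h1 : P - Real.exp I = Real.exp I * (Real.exp (Real.log P - I) - 1) := by
    rw [mul_sub, mul_one, ← Real.exp_add]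
    have : I + (Real.log P - I) = Real.log P := by ring
    rw [this, Real.exp_log hP0]
  have h2 : |Real.exp (Real.log P - I) - 1| ≤ 2 * |Real.log P - I| :=
    Real.abs_exp_sub_one_le (hlogI.trans hη1)
  have h3 : |P - Real.exp I| ≤ 2 * Real.exp I * η := by
    rw [h1, abs_mul, abs_of_pos hexp]
    calc Real.exp I * |Real.exp (Real.log P - I) - 1|
        ≤ Real.exp I * (2 * |Real.log P - I|) := mul_le_mul_of_nonneg_left h2 hexp.le
      _ ≤ Real.exp I * (2 * η) := by
          apply mul_le_mul_of_nonneg_left _ hexp.le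
          linarith
      _ = 2 * Real.exp I * η := by ring
  calc |P - Real.exp I| ≤ 2 * Real.exp I * η := h3
    _ ≤ ε / 2 := hηε
    _ < ε := by linarith
end

section
/- For every natural number k ≥ 1 and every real x ≥ 0, the sequence n ↦ ∏_{i=0}^{n−1} ( 1 + k·i^{k−1}·(x/n)^k ) converges to exp(x^k) as n → ∞. -/
open Finset Real Filter

/-- `(t+1)^k ≥ t^k + k t^(k-1)` for `t ≥ 0`, `k ≥ 1`. -/
lemma aux_key1 (k : ℕ) (hk : 1 ≤ k) (t : ℝ) (ht : 0 ≤ t) :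
    t ^ k + (k : ℝ) * t ^ (k - 1) ≤ (t + 1) ^ k := by
  induction k with
  | zero => omega
  | succ m ih =>
    rcases Nat.eq_zero_or_pos m with hm | hm
    · subst hm; simp
    · have ihm := ih hm
      have h1 : (0:ℝ) ≤ t + 1 := by linarith
      have h2 : (t + 1) ^ (m + 1) = (t + 1) * (t + 1) ^ m := by ring
      have h3 : (t + 1) * (t ^ m + (m : ℝ) * t ^ (m - 1)) ≤ (t + 1) * (t + 1) ^ m :=
        mul_le_mul_of_nonneg_left ihm h1
      have hts : t ^ (m - 1) * t = t ^ m := by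
        rw [← pow_succ]; congr 1; omega
      have h4 : t ^ (m + 1) + ((m : ℝ) + 1) * t ^ m ≤ (t + 1) * (t ^ m + (m : ℝ) * t ^ (m - 1)) := by
        have hnn : (0:ℝ) ≤ (m : ℝ) * t ^ (m - 1) := by positivity
        have hexp : (t + 1) * (t ^ m + (m : ℝ) * t ^ (m - 1))
            = t ^ (m + 1) + t ^ m + (m : ℝ) * (t ^ (m - 1) * t) + (m : ℝ) * t ^ (m - 1) := by
          ring
        rw [hexp, hts]
        linarith
      have : t ^ (m + 1) + ((m : ℝ) + 1) * t ^ m ≤ (t + 1) ^ (m + 1) := by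
        rw [h2]; linarith
      simpa using this

/-- `(t+1)^k ≤ t^k + k (t+1)^(k-1)` for `t ≥ 0`, `k ≥ 1`. -/
lemma aux_key2 (k : ℕ) (hk : 1 ≤ k) (t : ℝ) (ht : 0 ≤ t) :
    (t + 1) ^ k ≤ t ^ k + (k : ℝ) * (t + 1) ^ (k - 1) := by
  induction k with
  | zero => omega
  | succ m ih =>
    rcases Nat.eq_zero_or_pos m with hm | hm
    · subst hm; simp
    · have ihm := ih hm
      have h1 : (0:ℝ) ≤ t + 1 := by linarith
      have hts : (t + 1) ^ (m - 1) * (t + 1) = (t + 1) ^ m := by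
        rw [← pow_succ]; congr 1; omega
      have h3 : t * (t + 1) ^ m ≤ t * (t ^ m + (m : ℝ) * (t + 1) ^ (m - 1)) :=
        mul_le_mul_of_nonneg_left ihm ht
      have h5 : (m:ℝ) * (t * (t + 1) ^ (m - 1)) ≤ (m:ℝ) * (t + 1) ^ m := by
        apply mul_le_mul_of_nonneg_left _ (by positivity)
        rw [← hts]
        have : (0:ℝ) ≤ (t + 1) ^ (m - 1) := by positivity
        nlinarith
      have h2 : (t + 1) ^ (m + 1) = (t + 1) ^ m + t * (t + 1) ^ m := by ring
      have hexp : t * (t ^ m + (m : ℝ) * (t + 1) ^ (m - 1))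
          = t ^ (m + 1) + (m : ℝ) * (t * (t + 1) ^ (m - 1)) := by ring
      have : (t + 1) ^ (m + 1) ≤ t ^ (m + 1) + ((m:ℝ) + 1) * (t + 1) ^ m := by
        rw [h2]
        rw [hexp] at h3
        linarith
      simpa using this

lemma aux_sum_lb (k : ℕ) (hk : 1 ≤ k) (n : ℕ) :
    (k : ℝ) * ∑ i ∈ Finset.range n, (i : ℝ) ^ (k - 1) ≤ (n : ℝ) ^ k := by
  induction n with
  | zero => simp [zero_pow (by omega : k ≠ 0)]
  | succ m ih =>
    rw [Finset.sum_range_succ, mul_add]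
    have := aux_key1 k hk (m : ℝ) (by positivity)
    push_cast
    push_cast at ih
    linarith

lemma aux_sum_ub (k : ℕ) (hk : 1 ≤ k) (n : ℕ) :
    (n : ℝ) ^ k ≤ (k : ℝ) * ∑ i ∈ Finset.range n, (i : ℝ) ^ (k - 1) + (k : ℝ) * (n : ℝ) ^ (k - 1) := by
  induction n with
  | zero =>
    simp only [Nat.cast_zero, Finset.range_zero, Finset.sum_empty, mul_zero, zero_add]
    rw [zero_pow (by omega : k ≠ 0)]
    positivity
  | succ m ih =>
    rw [Finset.sum_range_succ, mul_add]
    have := aux_key2 k hk (m : ℝ) (by positivity)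
    push_cast
    push_cast at ih
    linarith

lemma aux_exp_le (a : ℝ) (ha : 0 ≤ a) : Real.exp (a - a ^ 2) ≤ 1 + a := by
  have h1 : (0:ℝ) < 1 + a := by linarith
  rw [← Real.exp_log h1, Real.exp_le_exp]
  have h2 : 1 - 1 / (1 + a) ≤ Real.log (1 + a) := by
    have h := Real.add_one_le_exp (-Real.log (1 + a))
    rw [Real.exp_neg, Real.exp_log h1] at h
    have : (1:ℝ) / (1 + a) = (1 + a)⁻¹ := one_div _
    linarith [h, this ▸ h]
  have h3 : a - a ^ 2 ≤ 1 - 1 / (1 + a) := by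
    have he : 1 - 1 / (1 + a) = a / (1 + a) := by field_simp; ring
    rw [he, le_div_iff₀ h1]
    nlinarith
  linarith

/-- For `k ≥ 1` and `x ≥ 0`, `∏_{i=0}^{n-1} (1 + k i^{k-1} (x/n)^k) → exp (x^k)` as `n → ∞`. -/
theorem riemann_product_tendsto_exp_pow
    (k : ℕ) (hk : 1 ≤ k) (x : ℝ) (hx : 0 ≤ x) :
    Filter.Tendsto
      (fun n : ℕ => ∏ i ∈ Finset.range n,
        (1 + (k : ℝ) * (i : ℝ) ^ (k - 1) * (x / (n : ℝ)) ^ k))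
      Filter.atTop (nhds (Real.exp (x ^ k))) := by
  set X : ℝ := x ^ k with hX
  have hX0 : 0 ≤ X := by positivity
  set C : ℝ := (k : ℝ) * X + (k : ℝ) * X ^ 2 with hC
  have hglim : Filter.Tendsto (fun n : ℕ => Real.exp (X - C / n)) Filter.atTop
      (nhds (Real.exp X)) := by
    have h1 : Filter.Tendsto (fun n : ℕ => C / (n : ℝ)) Filter.atTop (nhds 0) :=
      tendsto_const_div_atTop_nhds_zero_nat C
    have h2 : Filter.Tendsto (fun n : ℕ => X - C / n) Filter.atTop (nhds (X - 0)) :=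
      Filter.Tendsto.const_sub X h1
    rw [sub_zero] at h2
    exact (Real.continuous_exp.tendsto X).comp h2
  apply tendsto_of_tendsto_of_tendsto_of_le_of_le' hglim tendsto_const_nhds
  · -- lower bound, eventually
    filter_upwards [Filter.eventually_ge_atTop 1] with n hn
    have hn0 : (0:ℝ) < (n : ℝ) := by exact_mod_cast hn
    set a : ℕ → ℝ := fun i => (k : ℝ) * (i : ℝ) ^ (k - 1) * (x / (n : ℝ)) ^ k with haf
    have ha : ∀ i, 0 ≤ a i := fun i => by positivity
    have hnk : ((n:ℝ)) ^ k = (n:ℝ) ^ (k - 1) * (n:ℝ) := by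
      rw [← pow_succ]; congr 1; omega
    have hdk : (x / (n:ℝ)) ^ k * (n:ℝ) ^ k = X := by
      rw [← mul_pow, div_mul_cancel₀ _ (ne_of_gt hn0)]
    have hsum_eq : ∑ i ∈ Finset.range n, a i
        = (x / (n:ℝ)) ^ k * ((k : ℝ) * ∑ i ∈ Finset.range n, (i : ℝ) ^ (k - 1)) := by
      rw [Finset.mul_sum, Finset.mul_sum]
      exact Finset.sum_congr rfl fun i _ => by ring
    have hdiv : (x / (n:ℝ)) ^ k * ((k:ℝ) * (n:ℝ) ^ (k - 1)) = (k:ℝ) * X / n := by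
      rw [div_pow, ← hX]
      field_simp
      rw [hnk]; ring
    have hsum_ub : ∑ i ∈ Finset.range n, a i ≤ X := by
      rw [hsum_eq, ← hdk]
      exact mul_le_mul_of_nonneg_left (aux_sum_lb k hk n) (by positivity)
    have hsum_lb : X - (k:ℝ) * X / n ≤ ∑ i ∈ Finset.range n, a i := by
      have h := mul_le_mul_of_nonneg_left (aux_sum_ub k hk n)
        (by positivity : (0:ℝ) ≤ (x / (n:ℝ)) ^ k)
      rw [mul_add, hdiv] at h
      rw [hdk] at h
      rw [hsum_eq]
      linarith
    have hai_le : ∀ i ∈ Finset.range n, a i ≤ (k:ℝ) * X / n := by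
      intro i hi
      have hi' : (i:ℝ) ≤ (n:ℝ) := by
        exact_mod_cast le_of_lt (Finset.mem_range.mp hi)
      have hp : (i:ℝ) ^ (k - 1) ≤ (n:ℝ) ^ (k - 1) := pow_le_pow_left₀ (by positivity) hi' _
      calc a i ≤ (k : ℝ) * (n : ℝ) ^ (k - 1) * (x / (n : ℝ)) ^ k := by
            apply mul_le_mul_of_nonneg_right _ (by positivity)
            exact mul_le_mul_of_nonneg_left hp (by positivity)
        _ = (k:ℝ) * X / n := by rw [← hdiv]; ring
    have hsq : ∑ i ∈ Finset.range n, (a i) ^ 2 ≤ (k:ℝ) * X / n * X := by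
      calc ∑ i ∈ Finset.range n, (a i) ^ 2
          ≤ ∑ i ∈ Finset.range n, ((k:ℝ) * X / n) * a i := by
            apply Finset.sum_le_sum
            intro i hi
            have := hai_le i hi
            nlinarith [ha i]
        _ = ((k:ℝ) * X / n) * ∑ i ∈ Finset.range n, a i := by rw [Finset.mul_sum]
        _ ≤ ((k:ℝ) * X / n) * X := by
            apply mul_le_mul_of_nonneg_left hsum_ub (by positivity)
    calc Real.exp (X - C / n)
        ≤ Real.exp (∑ i ∈ Finset.range n, (a i - (a i) ^ 2)) := by
          rw [Real.exp_le_exp, Finset.sum_sub_distrib]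
          have : C / n = (k:ℝ) * X / n + (k:ℝ) * X / n * X := by
            rw [hC]; field_simp
          linarith
      _ = ∏ i ∈ Finset.range n, Real.exp (a i - (a i) ^ 2) := Real.exp_sum _ _
      _ ≤ ∏ i ∈ Finset.range n, (1 + a i) :=
          Finset.prod_le_prod (fun i _ => (Real.exp_pos _).le)
            (fun i _ => aux_exp_le (a i) (ha i))
  · -- upper bound, eventually (in fact always)
    filter_upwards with n
    set a : ℕ → ℝ := fun i => (k : ℝ) * (i : ℝ) ^ (k - 1) * (x / (n : ℝ)) ^ k with haf
    have ha : ∀ i, 0 ≤ a i := fun i => by positivity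
    have hsum_ub : ∑ i ∈ Finset.range n, a i ≤ X := by
      rcases Nat.eq_zero_or_pos n with hn | hn
      · subst hn; simpa using hX0
      · have hn0 : (0:ℝ) < (n : ℝ) := by exact_mod_cast hn
        have hdk : (x / (n:ℝ)) ^ k * (n:ℝ) ^ k = X := by
          rw [← mul_pow, div_mul_cancel₀ _ (ne_of_gt hn0)]
        have hsum_eq : ∑ i ∈ Finset.range n, a i
            = (x / (n:ℝ)) ^ k * ((k : ℝ) * ∑ i ∈ Finset.range n, (i : ℝ) ^ (k - 1)) := by
          rw [Finset.mul_sum, Finset.mul_sum]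
          exact Finset.sum_congr rfl fun i _ => by ring
        rw [hsum_eq, ← hdk]
        exact mul_le_mul_of_nonneg_left (aux_sum_lb k hk n) (by positivity)
    calc ∏ i ∈ Finset.range n, (1 + a i)
        ≤ ∏ i ∈ Finset.range n, Real.exp (a i) :=
          Finset.prod_le_prod (fun i _ => by linarith [ha i])
            (fun i _ => by linarith [Real.add_one_le_exp (a i)])
      _ = Real.exp (∑ i ∈ Finset.range n, a i) := (Real.exp_sum _ _).symm
      _ ≤ Real.exp X := Real.exp_le_exp.2 hsum_ub
end
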